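/- (Weighted geometric sum inequality, part (b)) Let n ≥ 2, L := ⌊log n / log 2⌋, and define λ_ℓ := 3π^{-2}ℓ^{-2} for 1 ≤ ℓ ≤ L/2 and λ_ℓ := 3π^{-2}(L + 1 − ℓ)^{-2} for L/2 < ℓ ≤ L. Then for any β > 0 and p ≥ 2, Σ_{ℓ=1}^L 2^{pℓ(1/2 − β)} / λ_ℓ^p ≤ (π²/3)^{p+1} times: (5/(β − 1/2)³)^p if β > 1/2; 2(log₂ n)^{2p+1} if β = 1/2; and (2n)^{(1/2 − β)p} (5/(1/2 − β)³)^p if β < 1/2. -/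
import Mathlib


open scoped BigOperators Classical
open Real

noncomputable section

/-- `L := ⌊log n / log 2⌋`. -/
def Lval (n : ℕ) : ℕ := ⌊Real.log n / Real.log 2⌋₊

/-- The weight sequence `λ_ℓ = 3π⁻²ℓ⁻²` for `1 ≤ ℓ ≤ L/2` and
`λ_ℓ = 3π⁻²(L+1−ℓ)⁻²` for `L/2 < ℓ ≤ L`. -/
def lamSeq (n : ℕ) (ℓ : ℕ) : ℝ :=
  if 2 * ℓ ≤ Lval n then 3 / (π ^ 2 * (ℓ : ℝ) ^ 2)
  else 3 / (π ^ 2 * ((Lval n : ℝ) + 1 - ℓ) ^ 2)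

namespace Stmt18Aux


lemma cube_le (t : ℝ) (ht : 0 ≤ t) : t ^ 3 ≤ 81 / 20 * (2 : ℝ) ^ t := by
  have hl2 : (0.6931471803 : ℝ) < Real.log 2 := Real.log_two_gt_d9
  have he : (2.7182818283 : ℝ) < Real.exp 1 := Real.exp_one_gt_d9
  have h2t : (2 : ℝ) ^ t = Real.exp (Real.log 2 * t) := by
    rw [Real.rpow_def_of_pos (by norm_num)]
  set s := Real.log 2 * t with hs
  have hs0 : 0 ≤ s := mul_nonneg (by linarith) ht
  have key : s / 3 ≤ Real.exp (s / 3) / Real.exp 1 := by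
    have h := Real.add_one_le_exp (s / 3 - 1)
    rw [Real.exp_sub] at h
    have hep : (0:ℝ) < Real.exp 1 := Real.exp_pos 1
    rw [le_div_iff₀ hep] at h ⊢
    nlinarith
  have h3 : (s / 3) ^ 3 ≤ (Real.exp (s / 3)) ^ 3 / (Real.exp 1) ^ 3 := by
    have := pow_le_pow_left₀ (by positivity) key 3
    simpa [div_pow] using this
  have hexp3 : (Real.exp (s / 3)) ^ 3 = Real.exp s := by
    rw [← Real.exp_nat_mul]
    norm_num
    ring_nf
  rw [hexp3] at h3
  have he3 : (0:ℝ) < (Real.exp 1) ^ 3 := by positivity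
  rw [div_pow, div_le_div_iff₀ (by norm_num) he3] at h3
  -- h3 : s^3 * exp 1 ^3 ≤ exp s * 27
  have hel : (1.884 : ℝ) ≤ Real.exp 1 * Real.log 2 := by nlinarith
  have hel3 : (20/3 : ℝ) ≤ (Real.exp 1 * Real.log 2) ^ 3 := by
    calc (20/3:ℝ) ≤ 1.884 ^ 3 := by norm_num
    _ ≤ _ := pow_le_pow_left₀ (by norm_num) hel 3
  have ht3 : (0:ℝ) ≤ t ^ 3 := by positivity
  have h6 : t ^ 3 * (20/3) ≤ 27 * Real.exp s := by
    calc t ^ 3 * (20/3) ≤ t ^ 3 * (Real.exp 1 * Real.log 2) ^ 3 := by nlinarith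
    _ = s ^ 3 * (Real.exp 1) ^ 3 := by rw [hs]; ring
    _ ≤ 27 * Real.exp s := by nlinarith
  rw [h2t]
  linarith

lemma sum_sq (M : ℕ) : ∑ ℓ ∈ Finset.Icc 1 M, (1:ℝ)/(ℓ:ℝ)^2 ≤ 2 := by
  have key : ∀ M : ℕ, 1 ≤ M → ∑ ℓ ∈ Finset.Icc 1 M, (1:ℝ)/(ℓ:ℝ)^2 ≤ 2 - 1/(M:ℝ) := by
    intro M hM
    induction M with
    | zero => omega
    | succ k ih =>
      rcases Nat.lt_or_ge k 1 with h | hk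
      · have : k = 0 := by omega
        subst this
        norm_num
      · rw [Finset.sum_Icc_succ_top (by omega : 1 ≤ k+1)]
        have ihk := ih hk
        have hk1 : (1:ℝ) ≤ (k:ℝ) := by exact_mod_cast hk
        have h1 : (1:ℝ)/((k:ℝ)+1)^2 ≤ 1/(k:ℝ) - 1/((k:ℝ)+1) := by
          rw [div_sub_div _ _ (by linarith) (by linarith)]
          rw [div_le_div_iff₀ (by positivity) (by positivity)]
          ring_nf
          nlinarith
        push_cast
        push_cast at ihk
        linarith
  rcases Nat.eq_zero_or_pos M with h | h
  · subst h; simp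
  · have := key M h
    have : (0:ℝ) < 1/(M:ℝ) := by positivity
    linarith [key M h]

lemma sum_reflect (L : ℕ) :
    ∑ ℓ ∈ Finset.Icc 1 L, (1:ℝ)/((L+1-ℓ : ℕ):ℝ)^2 = ∑ ℓ ∈ Finset.Icc 1 L, (1:ℝ)/(ℓ:ℝ)^2 := by
  refine Finset.sum_nbij' (fun ℓ => L+1-ℓ) (fun ℓ => L+1-ℓ) ?_ ?_ ?_ ?_ (fun a _ => rfl) <;>
    (intro a ha; simp only [Finset.mem_Icc] at ha ⊢; omega)

lemma termb (m : ℕ) (hm : 1 ≤ m) (pp α : ℝ) (hp : 2 ≤ pp) (hα : 0 < α) :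
    ((m:ℝ)^2)^pp * (2:ℝ)^(-(pp*(m:ℝ)*α)) ≤ (81/(20*α^3))^pp / (m:ℝ)^2 := by
  have hm1 : (1:ℝ) ≤ (m:ℝ) := by exact_mod_cast hm
  have hm0 : (0:ℝ) < (m:ℝ) := by linarith
  have e1 : (2:ℝ)^(-(pp*(m:ℝ)*α)) = ((2:ℝ)^(-((m:ℝ)*α)))^pp := by
    rw [← Real.rpow_mul (by norm_num : (0:ℝ) ≤ 2)]
    ring_nf
  have e2 : (m:ℝ)^2 ≤ (m:ℝ)^pp := by
    calc (m:ℝ)^2 = (m:ℝ)^((2:ℕ):ℝ) := (Real.rpow_natCast _ 2).symm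
    _ ≤ (m:ℝ)^pp := Real.rpow_le_rpow_of_exponent_le hm1 (by push_cast; linarith)
  have h2p : (0:ℝ) < (2:ℝ)^((m:ℝ)*α) := Real.rpow_pos_of_pos (by norm_num) _
  have key : (m:ℝ)^3 * (2:ℝ)^(-((m:ℝ)*α)) ≤ 81/(20*α^3) := by
    have h5 := cube_le ((m:ℝ)*α) (by positivity)
    rw [mul_pow] at h5
    rw [Real.rpow_neg (by norm_num : (0:ℝ) ≤ 2)]
    rw [mul_inv_le_iff₀ h2p, div_mul_eq_mul_div, le_div_iff₀ (by positivity : (0:ℝ) < 20*α^3)]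
    nlinarith
  rw [e1, ← Real.mul_rpow (by positivity) (by positivity), le_div_iff₀ (by positivity : (0:ℝ) < (m:ℝ)^2)]
  have hb : (0:ℝ) ≤ (m:ℝ)^2 * (2:ℝ)^(-((m:ℝ)*α)) := by positivity
  calc ((m:ℝ)^2 * (2:ℝ)^(-((m:ℝ)*α)))^pp * (m:ℝ)^2
      ≤ ((m:ℝ)^2 * (2:ℝ)^(-((m:ℝ)*α)))^pp * (m:ℝ)^pp :=
        mul_le_mul_of_nonneg_left e2 (Real.rpow_nonneg hb _)
    _ = ((m:ℝ)^2 * (2:ℝ)^(-((m:ℝ)*α)) * (m:ℝ))^pp := by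
        rw [← Real.mul_rpow hb (le_of_lt hm0)]
    _ = ((m:ℝ)^3 * (2:ℝ)^(-((m:ℝ)*α)))^pp := by
        congr 1; ring
    _ ≤ (81/(20*α^3))^pp := Real.rpow_le_rpow (by positivity) key (by linarith)

lemma master (L : ℕ) (pp α : ℝ) (hp : 2 ≤ pp) (hα : 0 < α) (m : ℕ → ℕ) (f : ℕ → ℝ)
    (hm1 : ∀ ℓ ∈ Finset.Icc 1 L, 1 ≤ m ℓ)
    (hmsplit : ∀ ℓ ∈ Finset.Icc 1 L, (1:ℝ)/((m ℓ:ℝ))^2 ≤ 1/(ℓ:ℝ)^2 + 1/((L+1-ℓ : ℕ):ℝ)^2)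
    (hf0 : ∀ ℓ ∈ Finset.Icc 1 L, 0 ≤ f ℓ)
    (hf : ∀ ℓ ∈ Finset.Icc 1 L, f ℓ ≤ (2:ℝ)^(-(pp * (m ℓ:ℝ) * α))) :
    ∑ ℓ ∈ Finset.Icc 1 L, ((m ℓ:ℝ)^2)^pp * f ℓ ≤ π^2/3 * (5/α^3)^pp := by
  have hC : (0:ℝ) ≤ (81/(20*α^3))^pp := Real.rpow_nonneg (by positivity) _
  have step1 : ∑ ℓ ∈ Finset.Icc 1 L, ((m ℓ:ℝ)^2)^pp * f ℓ
      ≤ ∑ ℓ ∈ Finset.Icc 1 L, (81/(20*α^3))^pp * ((1:ℝ)/(ℓ:ℝ)^2 + 1/((L+1-ℓ : ℕ):ℝ)^2) := by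
    apply Finset.sum_le_sum
    intro ℓ hℓ
    calc ((m ℓ:ℝ)^2)^pp * f ℓ
        ≤ ((m ℓ:ℝ)^2)^pp * (2:ℝ)^(-(pp * (m ℓ:ℝ) * α)) :=
          mul_le_mul_of_nonneg_left (hf ℓ hℓ) (Real.rpow_nonneg (by positivity) _)
      _ ≤ (81/(20*α^3))^pp / ((m ℓ:ℝ))^2 := termb (m ℓ) (hm1 ℓ hℓ) pp α hp hα
      _ = (81/(20*α^3))^pp * (1/((m ℓ:ℝ))^2) := by ring
      _ ≤ (81/(20*α^3))^pp * ((1:ℝ)/(ℓ:ℝ)^2 + 1/((L+1-ℓ : ℕ):ℝ)^2) :=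
          mul_le_mul_of_nonneg_left (hmsplit ℓ hℓ) hC
  rw [← Finset.mul_sum] at step1
  have hsum4 : ∑ ℓ ∈ Finset.Icc 1 L, ((1:ℝ)/(ℓ:ℝ)^2 + 1/((L+1-ℓ : ℕ):ℝ)^2) ≤ 4 := by
    rw [Finset.sum_add_distrib, sum_reflect]
    have := sum_sq L
    linarith
  have hc2 : (81/(20*α^3))^pp = (5/α^3)^pp * ((81:ℝ)/100)^pp := by
    rw [← Real.mul_rpow (by positivity) (by norm_num)]
    congr 1
    ring
  have h81 : ((81:ℝ)/100)^pp ≤ ((81:ℝ)/100)^(2:ℝ) :=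
    Real.rpow_le_rpow_of_exponent_ge (by norm_num) (by norm_num) hp
  have h81' : ((81:ℝ)/100)^(2:ℝ) = (6561/10000 : ℝ) := by
    rw [show (2:ℝ) = ((2:ℕ):ℝ) by norm_num, Real.rpow_natCast]; norm_num
  have hπ4 : (3.141592:ℝ) < π := Real.pi_gt_d6
  have h5 : (0:ℝ) ≤ (5/α^3)^pp := Real.rpow_nonneg (by positivity) _
  calc ∑ ℓ ∈ Finset.Icc 1 L, ((m ℓ:ℝ)^2)^pp * f ℓ
      ≤ (81/(20*α^3))^pp * 4 := le_trans step1 (mul_le_mul_of_nonneg_left hsum4 hC)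
    _ = (5/α^3)^pp * (((81:ℝ)/100)^pp * 4) := by rw [hc2]; ring
    _ ≤ (5/α^3)^pp * (π^2/3) := by
        apply mul_le_mul_of_nonneg_left _ h5
        rw [h81'] at h81
        nlinarith
    _ = π^2/3 * (5/α^3)^pp := by ring

end Stmt18Aux

open Stmt18Aux

set_option maxHeartbeats 1600000 in
/-- Weighted geometric sum inequality, part (b): for `n ≥ 2`, `β > 0` and
`p ≥ 2`, the sum `∑_{ℓ=1}^L 2^{pℓ(1/2−β)}/λ_ℓ^p` is at most `(π²/3)^{p+1}` times
`(5/(β−1/2)³)^p` if `β > 1/2`, `2(log₂ n)^{2p+1}` if `β = 1/2`, and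
`(2n)^{(1/2−β)p}(5/(1/2−β)³)^p` if `β < 1/2`. -/
theorem stmt18 (n : ℕ) (hn : 2 ≤ n) (pp β : ℝ) (hp : 2 ≤ pp) (hβ : 0 < β) :
    (1 / 2 < β →
      (∑ ℓ ∈ Finset.Icc 1 (Lval n),
          (2 : ℝ) ^ (pp * ℓ * (1 / 2 - β)) / lamSeq n ℓ ^ pp) ≤
        (π ^ 2 / 3) ^ (pp + 1) * (5 / (β - 1 / 2) ^ 3) ^ pp) ∧
    (β = 1 / 2 →
      (∑ ℓ ∈ Finset.Icc 1 (Lval n),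
          (2 : ℝ) ^ (pp * ℓ * (1 / 2 - β)) / lamSeq n ℓ ^ pp) ≤
        (π ^ 2 / 3) ^ (pp + 1) * (2 * (Real.log n / Real.log 2) ^ (2 * pp + 1))) ∧
    (β < 1 / 2 →
      (∑ ℓ ∈ Finset.Icc 1 (Lval n),
          (2 : ℝ) ^ (pp * ℓ * (1 / 2 - β)) / lamSeq n ℓ ^ pp) ≤
        (π ^ 2 / 3) ^ (pp + 1) *
          ((2 * n : ℝ) ^ ((1 / 2 - β) * pp) * (5 / (1 / 2 - β) ^ 3) ^ pp)) := by
  have hπ : (0:ℝ) < π := Real.pi_pos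
  have hπ4 : (3.141592:ℝ) < π := Real.pi_gt_d6
  have h1π : (1:ℝ) ≤ π^2/3 := by nlinarith
  have hπ0 : π^2/3 ≠ 0 := by positivity
  have hpp0 : (0:ℝ) < pp := by linarith
  have hlog2 : (0:ℝ) < Real.log 2 := Real.log_pos (by norm_num)
  have hn0 : (0:ℝ) < (n:ℝ) := by exact_mod_cast Nat.lt_of_lt_of_le (by norm_num) hn
  have hlogn : Real.log 2 ≤ Real.log n := by
    apply Real.log_le_log (by norm_num)
    exact_mod_cast hn
  have hR1 : (1:ℝ) ≤ Real.log n / Real.log 2 := by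
    rw [le_div_iff₀ hlog2]; linarith
  set L := Lval n with hL
  have hL1 : 1 ≤ L := Nat.le_floor (by exact_mod_cast hR1)
  have hLR : (L:ℝ) ≤ Real.log n / Real.log 2 := Nat.floor_le (by linarith)
  set m : ℕ → ℕ := fun ℓ => if 2*ℓ ≤ L then ℓ else L+1-ℓ with hm
  have hm1 : ∀ ℓ ∈ Finset.Icc 1 L, 1 ≤ m ℓ := by
    intro ℓ hℓ; simp only [Finset.mem_Icc] at hℓ; simp only [hm]; split <;> omega
  have hmL : ∀ ℓ ∈ Finset.Icc 1 L, m ℓ ≤ L := by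
    intro ℓ hℓ; simp only [Finset.mem_Icc] at hℓ; simp only [hm]; split <;> omega
  have hmℓ : ∀ ℓ ∈ Finset.Icc 1 L, m ℓ ≤ ℓ := by
    intro ℓ hℓ; simp only [Finset.mem_Icc] at hℓ; simp only [hm]; split <;> omega
  have hmr : ∀ ℓ ∈ Finset.Icc 1 L, m ℓ + ℓ ≤ L + 1 := by
    intro ℓ hℓ; simp only [Finset.mem_Icc] at hℓ; simp only [hm]; split <;> omega
  have hmsplit : ∀ ℓ ∈ Finset.Icc 1 L,
      (1:ℝ)/((m ℓ:ℝ))^2 ≤ 1/(ℓ:ℝ)^2 + 1/((L+1-ℓ : ℕ):ℝ)^2 := by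
    intro ℓ hℓ
    simp only [hm]
    split
    · have : (0:ℝ) ≤ 1/((L+1-ℓ : ℕ):ℝ)^2 := by positivity
      linarith
    · have : (0:ℝ) ≤ 1/(ℓ:ℝ)^2 := by positivity
      linarith
  have hterm : ∀ ℓ ∈ Finset.Icc 1 L,
      (2:ℝ)^(pp * (ℓ:ℝ) * (1/2 - β)) / lamSeq n ℓ ^ pp
        = (π^2/3)^pp * ((((m ℓ):ℝ)^2)^pp * (2:ℝ)^(pp * (ℓ:ℝ) * (1/2 - β))) := by
    intro ℓ hℓ
    simp only [Finset.mem_Icc] at hℓ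
    have hℓ1 : (1:ℝ) ≤ (ℓ:ℝ) := by exact_mod_cast hℓ.1
    have hlam : lamSeq n ℓ = ((π^2/3) * ((m ℓ:ℝ))^2)⁻¹ := by
      rw [lamSeq, ← hL]
      simp only [hm]
      by_cases h : 2*ℓ ≤ L
      · rw [if_pos h, if_pos h]
        field_simp
      · rw [if_neg h, if_neg h]
        have hℓL : ℓ ≤ L := hℓ.2
        have hcast : ((L + 1 - ℓ : ℕ):ℝ) = (L:ℝ) + 1 - (ℓ:ℝ) := by
          have h1 : ℓ ≤ L + 1 := by omega
          push_cast [h1]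
          ring
        rw [hcast]
        have hne : (L:ℝ) + 1 - (ℓ:ℝ) ≠ 0 := by
          have : (ℓ:ℝ) ≤ (L:ℝ) := by exact_mod_cast hℓL
          intro hc; nlinarith
        field_simp
    rw [hlam, Real.inv_rpow (by positivity), div_eq_mul_inv, inv_inv,
      Real.mul_rpow (by positivity) (by positivity)]
    ring
  refine ⟨?_, ?_, ?_⟩
  · -- case β > 1/2
    intro hβ2
    set α := β - 1/2 with hα'
    have hα : 0 < α := by simp only [hα']; linarith
    have hppα : (0:ℝ) ≤ pp * α := by positivity
    have hf : ∀ ℓ ∈ Finset.Icc 1 L,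
        (2:ℝ)^(pp * (ℓ:ℝ) * (1/2 - β)) ≤ (2:ℝ)^(-(pp * ((m ℓ):ℝ) * α)) := by
      intro ℓ hℓ
      apply Real.rpow_le_rpow_of_exponent_le (by norm_num)
      have hmℓ' : ((m ℓ):ℝ) ≤ (ℓ:ℝ) := by exact_mod_cast hmℓ ℓ hℓ
      have := mul_le_mul_of_nonneg_left hmℓ' hppα
      simp only [hα'] at *
      nlinarith
    have main := master L pp α hp hα m
      (fun ℓ => (2:ℝ)^(pp * (ℓ:ℝ) * (1/2 - β))) hm1 hmsplit
      (fun ℓ _ => le_of_lt (Real.rpow_pos_of_pos (by norm_num) _)) hf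
    calc ∑ ℓ ∈ Finset.Icc 1 L, (2:ℝ)^(pp * (ℓ:ℝ) * (1/2 - β)) / lamSeq n ℓ ^ pp
        = ∑ ℓ ∈ Finset.Icc 1 L,
            (π^2/3)^pp * ((((m ℓ):ℝ)^2)^pp * (2:ℝ)^(pp * (ℓ:ℝ) * (1/2 - β))) :=
          Finset.sum_congr rfl hterm
      _ = (π^2/3)^pp * ∑ ℓ ∈ Finset.Icc 1 L,
            (((m ℓ):ℝ)^2)^pp * (2:ℝ)^(pp * (ℓ:ℝ) * (1/2 - β)) := by
          rw [Finset.mul_sum]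
      _ ≤ (π^2/3)^pp * (π^2/3 * (5/α^3)^pp) :=
          mul_le_mul_of_nonneg_left main (Real.rpow_nonneg (by positivity) _)
      _ = (π^2/3)^(pp+1) * (5/α^3)^pp := by
          rw [Real.rpow_add_one hπ0]; ring
  · -- case β = 1/2
    intro hβ2
    subst hβ2
    have hR0 : (0:ℝ) < Real.log n / Real.log 2 := by linarith
    have hbound : ∀ ℓ ∈ Finset.Icc 1 L,
        (π^2/3)^pp * ((((m ℓ):ℝ)^2)^pp * (2:ℝ)^(pp * (ℓ:ℝ) * (1/2 - 1/2)))
          ≤ (π^2/3)^pp * ((Real.log n / Real.log 2)^2)^pp := by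
      intro ℓ hℓ
      have e0 : pp * (ℓ:ℝ) * (1/2 - 1/2 : ℝ) = 0 := by ring
      rw [e0, Real.rpow_zero, mul_one]
      apply mul_le_mul_of_nonneg_left _ (Real.rpow_nonneg (by positivity) _)
      apply Real.rpow_le_rpow (by positivity) _ (by linarith)
      have h1 : ((m ℓ):ℝ) ≤ (L:ℝ) := by exact_mod_cast hmL ℓ hℓ
      have h0 : (0:ℝ) ≤ ((m ℓ):ℝ) := Nat.cast_nonneg _
      nlinarith
    have e3 : ((Real.log n / Real.log 2)^2)^pp = (Real.log n / Real.log 2)^(2*pp) := by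
      rw [← Real.rpow_natCast (Real.log n / Real.log 2) 2, ← Real.rpow_mul (by linarith)]
      norm_num
    calc ∑ ℓ ∈ Finset.Icc 1 L, (2:ℝ)^(pp * (ℓ:ℝ) * (1/2 - 1/2)) / lamSeq n ℓ ^ pp
        = ∑ ℓ ∈ Finset.Icc 1 L,
            (π^2/3)^pp * ((((m ℓ):ℝ)^2)^pp * (2:ℝ)^(pp * (ℓ:ℝ) * (1/2 - 1/2))) :=
          Finset.sum_congr rfl hterm
      _ ≤ ∑ _ℓ ∈ Finset.Icc 1 L, (π^2/3)^pp * ((Real.log n / Real.log 2)^2)^pp :=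
          Finset.sum_le_sum hbound
      _ = (L:ℝ) * ((π^2/3)^pp * ((Real.log n / Real.log 2)^2)^pp) := by
          rw [Finset.sum_const, Nat.card_Icc]
          simp [nsmul_eq_mul]
      _ ≤ (Real.log n / Real.log 2) * ((π^2/3)^pp * ((Real.log n / Real.log 2)^2)^pp) := by
          apply mul_le_mul_of_nonneg_right hLR
          positivity
      _ ≤ (π^2/3)^(pp+1) * (2 * (Real.log n / Real.log 2)^(2*pp+1)) := by
          rw [e3, Real.rpow_add_one hπ0, Real.rpow_add_one (ne_of_gt hR0)]
          have h2 : (0:ℝ) ≤ (π^2/3)^pp := Real.rpow_nonneg (by positivity) _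
          have h3 : (0:ℝ) ≤ (Real.log n / Real.log 2)^(2*pp) := Real.rpow_nonneg (by linarith) _
          nlinarith [mul_nonneg h2 (mul_nonneg h3 (le_of_lt hR0))]
  · -- case β < 1/2
    intro hβ2
    set α := 1/2 - β with hα'
    have hα : 0 < α := by simp only [hα']; linarith
    have hppα : (0:ℝ) ≤ pp * α := by positivity
    have h2pos : (0:ℝ) < (2:ℝ)^(pp*((L:ℝ)+1)*α) := Real.rpow_pos_of_pos (by norm_num) _
    have hf : ∀ ℓ ∈ Finset.Icc 1 L,
        (2:ℝ)^(pp * (ℓ:ℝ) * α - pp*((L:ℝ)+1)*α) ≤ (2:ℝ)^(-(pp * ((m ℓ):ℝ) * α)) := by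
      intro ℓ hℓ
      apply Real.rpow_le_rpow_of_exponent_le (by norm_num)
      have h1 : ((m ℓ):ℝ) + (ℓ:ℝ) ≤ (L:ℝ) + 1 := by exact_mod_cast hmr ℓ hℓ
      nlinarith [mul_le_mul_of_nonneg_left h1 hppα]
    have main := master L pp α hp hα m
      (fun ℓ => (2:ℝ)^(pp * (ℓ:ℝ) * α - pp*((L:ℝ)+1)*α)) hm1 hmsplit
      (fun ℓ _ => le_of_lt (Real.rpow_pos_of_pos (by norm_num) _)) hf
    have hsplit2 : ∀ ℓ ∈ Finset.Icc 1 L,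
        (2:ℝ)^(pp * (ℓ:ℝ) * α)
          = (2:ℝ)^(pp*((L:ℝ)+1)*α) * (2:ℝ)^(pp * (ℓ:ℝ) * α - pp*((L:ℝ)+1)*α) := by
      intro ℓ hℓ
      rw [← Real.rpow_add (by norm_num : (0:ℝ) < 2)]
      congr 1
      ring
    have h2L : (2:ℝ)^(pp*((L:ℝ)+1)*α) ≤ ((2:ℝ)*(n:ℝ))^(α*pp) := by
      rw [Real.rpow_def_of_pos (by norm_num : (0:ℝ) < 2),
          Real.rpow_def_of_pos (by nlinarith : (0:ℝ) < 2*(n:ℝ))]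
      apply Real.exp_le_exp.2
      have hlog2n : ((L:ℝ)+1) * Real.log 2 ≤ Real.log (2*(n:ℝ)) := by
        rw [Real.log_mul (by norm_num) (ne_of_gt hn0)]
        have hLl : (L:ℝ) * Real.log 2 ≤ Real.log n := by
          rw [← le_div_iff₀ hlog2]; exact hLR
        linarith
      nlinarith [mul_le_mul_of_nonneg_right hlog2n hppα]
    calc ∑ ℓ ∈ Finset.Icc 1 L, (2:ℝ)^(pp * (ℓ:ℝ) * α) / lamSeq n ℓ ^ pp
        = ∑ ℓ ∈ Finset.Icc 1 L,
            (π^2/3)^pp * ((((m ℓ):ℝ)^2)^pp * (2:ℝ)^(pp * (ℓ:ℝ) * α)) :=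
          Finset.sum_congr rfl hterm
      _ = ∑ ℓ ∈ Finset.Icc 1 L,
            ((π^2/3)^pp * (2:ℝ)^(pp*((L:ℝ)+1)*α)) * ((((m ℓ):ℝ)^2)^pp * (2:ℝ)^(pp * (ℓ:ℝ) * α - pp*((L:ℝ)+1)*α)) := by
          refine Finset.sum_congr rfl fun ℓ hℓ => ?_
          rw [hsplit2 ℓ hℓ]
          ring
      _ = ((π^2/3)^pp * (2:ℝ)^(pp*((L:ℝ)+1)*α)) *
            ∑ ℓ ∈ Finset.Icc 1 L, (((m ℓ):ℝ)^2)^pp * (2:ℝ)^(pp * (ℓ:ℝ) * α - pp*((L:ℝ)+1)*α) := by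
          rw [Finset.mul_sum]
      _ ≤ ((π^2/3)^pp * (2:ℝ)^(pp*((L:ℝ)+1)*α)) * (π^2/3 * (5/α^3)^pp) :=
          mul_le_mul_of_nonneg_left main (by positivity)
      _ ≤ (π^2/3)^(pp+1) * (((2:ℝ)*(n:ℝ))^(α*pp) * (5/α^3)^pp) := by
          rw [Real.rpow_add_one hπ0]
          have h5 : (0:ℝ) ≤ (5/α^3)^pp := Real.rpow_nonneg (by positivity) _
          have hA : (0:ℝ) ≤ (π^2/3)^pp := Real.rpow_nonneg (by positivity) _
          nlinarith [mul_le_mul_of_nonneg_left h2L (mul_nonneg (mul_nonneg (by positivity : (0:ℝ) ≤ π^2/3) hA) h5)]
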